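/- arXiv:2305.13459 — 4 statements merged into one kernel-verified Lean document; each statement's English description precedes it below -/
import Mathlib

section
/- Let (X_t)_{t≥0} be a sequence of nonnegative-integer-valued random variables that is non-increasing (X_{t+1} ≤ X_t almost surely), with X_0 ≤ D, and suppose there is δ > 0 such that E[X_t − X_{t+1} | X_t = x] ≥ δ·x for all x > 0 and all t. Let T = min{t : X_t = 0}. Then E[T] ≤ (1 + ln D)/δ. -/
open MeasureTheory
open scoped ENNReal

/-!
The potential `g(0) = 0`, `g(s) = 1 + log s` for `s ≥ 1` satisfies `s - y ≤ s (g s - g y)` for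
`y ≤ s` (concavity of `log`, with the jump `g 1 - g 0 = 1` absorbing the last step). Hence a drift
of `δ x` of `X` on `{X t = x}` becomes a drift of at least `δ` of `g(X)` on every level `x > 0`, so
`δ P(X t ≠ 0) ≤ E g(X t) - E g(X (t+1))`. Telescoping gives `δ ∑ₜ P(X t ≠ 0) ≤ E g(X 0) ≤ 1 + log D`,
and since `X` is non-increasing, `T > t` exactly when `X t ≠ 0`, so `E T = ∑ₜ P(X t ≠ 0)`.
-/

noncomputable def logPotential (s : ℕ) : ℝ := if s = 0 then 0 else 1 + Real.log s

lemma logPotential_zero : logPotential 0 = 0 := if_pos rfl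

lemma logPotential_of_ne_zero {s : ℕ} (hs : s ≠ 0) : logPotential s = 1 + Real.log s :=
  if_neg hs

lemma logPotential_nonneg (s : ℕ) : 0 ≤ logPotential s := by
  rcases eq_or_ne s 0 with rfl | hs
  · rw [logPotential_zero]
  · rw [logPotential_of_ne_zero hs]
    linarith [Real.log_natCast_nonneg s]

lemma logPotential_le_one_add_log (s : ℕ) : logPotential s ≤ 1 + Real.log s := by
  rcases eq_or_ne s 0 with rfl | hs
  · simp [logPotential_zero]
  · rw [logPotential_of_ne_zero hs]

lemma monotone_logPotential : Monotone logPotential := by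
  intro a b hab
  rcases eq_or_ne a 0 with rfl | ha
  · rw [logPotential_zero]
    exact logPotential_nonneg b
  · have ha' : (0 : ℝ) < a := Nat.cast_pos.2 (Nat.pos_of_ne_zero ha)
    rw [logPotential_of_ne_zero ha, logPotential_of_ne_zero (by omega)]
    gcongr

lemma sub_le_mul_logPotential_sub {y s : ℕ} (hys : y ≤ s) :
    (s - y : ℝ) ≤ s * (logPotential s - logPotential y) := by
  rcases eq_or_ne y 0 with rfl | hy
  · rcases eq_or_ne s 0 with rfl | hs
    · simp
    · rw [logPotential_of_ne_zero hs, logPotential_zero]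
      have : (0 : ℝ) ≤ s * Real.log s := by positivity
      linarith
  · have hy' : (0 : ℝ) < y := Nat.cast_pos.2 (Nat.pos_of_ne_zero hy)
    have hs' : (0 : ℝ) < s := hy'.trans_le (Nat.cast_le.2 hys)
    rw [logPotential_of_ne_zero hy, logPotential_of_ne_zero (by omega)]
    have hlog : 1 - y / s ≤ Real.log s - Real.log y := by
      simpa [Real.log_div hs'.ne' hy'.ne'] using Real.one_sub_inv_le_log_of_pos (div_pos hs' hy')
    calc (s - y : ℝ) = s * (1 - y / s) := by field_simp
      _ ≤ s * (1 + Real.log s - (1 + Real.log y)) :=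
        mul_le_mul_of_nonneg_left (by linarith) hs'.le

lemma sum_range_le_div_of_mul_le_sub {a b : ℕ → ℝ} {δ : ℝ} (hδ : 0 < δ) (ha : ∀ n, 0 ≤ a n)
    (hab : ∀ t, δ * b t ≤ a t - a (t + 1)) (n : ℕ) :
    ∑ t ∈ Finset.range n, b t ≤ a 0 / δ := by
  rw [le_div_iff₀' hδ, Finset.mul_sum]
  calc ∑ t ∈ Finset.range n, δ * b t ≤ ∑ t ∈ Finset.range n, (a t - a (t + 1)) :=
        Finset.sum_le_sum fun t _ => hab t
    _ = a 0 - a n := Finset.sum_range_sub' a n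
    _ ≤ a 0 := sub_le_self _ (ha n)

lemma tsum_le_ofReal_div_of_mul_toReal_le_sub {m : ℕ → ℝ≥0∞} (hm : ∀ t, m t ≠ ∞) {a : ℕ → ℝ}
    {δ : ℝ} (hδ : 0 < δ) (ha : ∀ n, 0 ≤ a n) (hma : ∀ t, δ * (m t).toReal ≤ a t - a (t + 1)) :
    ∑' t, m t ≤ ENNReal.ofReal (a 0 / δ) := by
  refine ENNReal.tsum_le_of_sum_range_le fun n => ?_
  calc ∑ t ∈ Finset.range n, m t = ENNReal.ofReal (∑ t ∈ Finset.range n, (m t).toReal) := by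
        rw [ENNReal.ofReal_sum_of_nonneg fun _ _ => ENNReal.toReal_nonneg]
        simp only [ENNReal.ofReal_toReal (hm _)]
    _ ≤ ENNReal.ofReal (a 0 / δ) :=
        ENNReal.ofReal_le_ofReal (sum_range_le_div_of_mul_le_sub hδ ha hma n)

lemma IsUpperSet.sInf_natCast_image_eq_encard_compl {S : Set ℕ} (hS : IsUpperSet S) :
    sInf ((fun t : ℕ => (t : ℝ≥0∞)) '' S) = (Sᶜ.encard : ℝ≥0∞) := by
  rcases S.eq_empty_or_nonempty with rfl | hne
  · simp
  · have hS' : S = Set.Ici (sInf S) :=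
      Set.ext fun t => ⟨fun ht => Nat.sInf_le ht, fun ht => hS ht (Nat.sInf_mem hne)⟩
    rw [hS', Set.compl_Ici, ← Finset.coe_Iio, Set.encard_coe_eq_coe_finsetCard, Nat.card_Iio]
    refine le_antisymm (sInf_le ⟨_, Set.self_mem_Ici, rfl⟩) (le_sInf ?_)
    rintro _ ⟨t, ht, rfl⟩
    exact Nat.cast_le.2 ht

section

variable {Ω : Type*} [MeasurableSpace Ω] {μ : Measure Ω}

lemma lintegral_hittingTime_eq_tsum_measure {X : ℕ → Ω → ℕ} (hX : ∀ t, Measurable (X t))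
    (hanti : ∀ᵐ ω ∂μ, Antitone fun t => X t ω) :
    ∫⁻ ω, sInf ((fun t : ℕ => (t : ℝ≥0∞)) '' {t : ℕ | X t ω = 0}) ∂μ =
      ∑' t, μ {ω | X t ω ≠ 0} := by
  have hmeas : ∀ t, MeasurableSet {ω | X t ω ≠ 0} :=
    fun t => (hX t (measurableSet_singleton 0)).compl
  calc ∫⁻ ω, sInf ((fun t : ℕ => (t : ℝ≥0∞)) '' {t : ℕ | X t ω = 0}) ∂μ
      = ∫⁻ ω, ∑' t, {ω | X t ω ≠ 0}.indicator 1 ω ∂μ := by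
        refine lintegral_congr_ae (hanti.mono fun ω hω => ?_)
        dsimp only
        have hup : IsUpperSet {t : ℕ | X t ω = 0} :=
          fun a b hab (ha : X a ω = 0) => Nat.le_zero.1 (ha ▸ hω hab)
        rw [hup.sInf_natCast_image_eq_encard_compl, ← ENNReal.tsum_set_one,
          tsum_subtype _ fun _ => (1 : ℝ≥0∞)]
        simp [Set.indicator_apply]
    _ = ∑' t, μ {ω | X t ω ≠ 0} := by
        rw [lintegral_tsum fun t => (measurable_one.indicator (hmeas t)).aemeasurable]
        exact tsum_congr fun t => lintegral_indicator_one (hmeas t)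

variable [IsFiniteMeasure μ]

lemma integrable_comp_of_ae_le {Y : Ω → ℕ} (hY : Measurable Y) {D : ℕ}
    (hYD : ∀ᵐ ω ∂μ, Y ω ≤ D) (f : ℕ → ℝ) : Integrable (fun ω => f (Y ω)) μ := by
  refine Integrable.of_bound (measurable_from_nat.comp hY).aestronglyMeasurable
    (∑ s ∈ Finset.range (D + 1), ‖f s‖) ?_
  filter_upwards [hYD] with ω hω
  exact Finset.single_le_sum (f := fun s => ‖f s‖) (fun _ _ => norm_nonneg _)
    (Finset.mem_range.2 (Nat.lt_succ_of_le hω))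

lemma mul_toReal_measure_ne_zero_le_integral {Y : Ω → ℕ} (hY : Measurable Y) {D : ℕ}
    (hYD : ∀ᵐ ω ∂μ, Y ω ≤ D) {h : Ω → ℝ} (hint : Integrable h μ) (hnonneg : 0 ≤ᵐ[μ] h) {c : ℝ}
    (hlevel : ∀ s, 0 < s → c * (μ {ω | Y ω = s}).toReal ≤ ∫ ω in {ω | Y ω = s}, h ω ∂μ) :
    c * (μ {ω | Y ω ≠ 0}).toReal ≤ ∫ ω, h ω ∂μ := by
  have hlevels : ∀ s ∈ Finset.Icc 1 D, MeasurableSet {ω | Y ω = s} :=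
    fun s _ => hY (measurableSet_singleton s)
  have hdisj : (Finset.Icc 1 D : Set ℕ).PairwiseDisjoint fun s => {ω | Y ω = s} :=
    Set.pairwiseDisjoint_fiber Y _
  have hcover : {ω | Y ω ≠ 0} =ᵐ[μ] ⋃ s ∈ Finset.Icc 1 D, {ω | Y ω = s} := by
    refine Filter.eventuallyEq_set.2 ?_
    filter_upwards [hYD] with ω hω
    simp only [Set.mem_ofPred_eq, Set.mem_iUnion, Finset.mem_Icc, exists_prop]
    exact ⟨fun h0 => ⟨Y ω, ⟨by omega, hω⟩, rfl⟩, by rintro ⟨s, ⟨hs, -⟩, rfl⟩; omega⟩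
  calc c * (μ {ω | Y ω ≠ 0}).toReal = ∑ s ∈ Finset.Icc 1 D, c * (μ {ω | Y ω = s}).toReal := by
        rw [measure_congr hcover, measure_biUnion_finset hdisj hlevels,
          ENNReal.toReal_sum fun _ _ => measure_ne_top μ _, Finset.mul_sum]
    _ ≤ ∑ s ∈ Finset.Icc 1 D, ∫ ω in {ω | Y ω = s}, h ω ∂μ :=
        Finset.sum_le_sum fun s hs => hlevel s (Finset.mem_Icc.1 hs).1
    _ = ∫ ω in ⋃ s ∈ Finset.Icc 1 D, {ω | Y ω = s}, h ω ∂μ :=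
        (integral_biUnion_finset _ hlevels hdisj fun _ _ => hint.integrableOn).symm
    _ ≤ ∫ ω, h ω ∂μ := setIntegral_le_integral hint hnonneg

variable {Y Y' : Ω → ℕ} (hY : Measurable Y) (hY' : Measurable Y') {D : ℕ}
  (hYD : ∀ᵐ ω ∂μ, Y ω ≤ D) (hY'Y : ∀ᵐ ω ∂μ, Y' ω ≤ Y ω) {δ : ℝ}
include hY hY' hYD hY'Y

lemma mul_toReal_measure_le_setIntegral_logPotential_sub {s : ℕ} (hs : 0 < s)
    (hdrift : μ {ω | Y ω = s} ≠ 0 →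
      δ * s * (μ {ω | Y ω = s}).toReal ≤ ∫ ω in {ω | Y ω = s}, ((Y ω : ℝ) - Y' ω) ∂μ) :
    δ * (μ {ω | Y ω = s}).toReal ≤
      ∫ ω in {ω | Y ω = s}, (logPotential (Y ω) - logPotential (Y' ω)) ∂μ := by
  by_cases hz : μ {ω | Y ω = s} = 0
  · simp [Measure.restrict_eq_zero.mpr hz, hz]
  have hY'D : ∀ᵐ ω ∂μ, Y' ω ≤ D := by
    filter_upwards [hYD, hY'Y] with ω h h' using h'.trans h
  have hint (f : ℕ → ℝ) : Integrable (fun ω => f (Y ω) - f (Y' ω)) μ :=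
    (integrable_comp_of_ae_le hY hYD f).sub (integrable_comp_of_ae_le hY' hY'D f)
  have hdecrease : ∫ ω in {ω | Y ω = s}, ((Y ω : ℝ) - Y' ω) ∂μ ≤
      s * ∫ ω in {ω | Y ω = s}, (logPotential (Y ω) - logPotential (Y' ω)) ∂μ := by
    rw [← integral_const_mul]
    refine integral_mono_ae (hint Nat.cast).integrableOn
      ((hint logPotential).integrableOn.const_mul _) ?_
    filter_upwards [ae_restrict_mem (hY (measurableSet_singleton s)), ae_restrict_of_ae hY'Y]
      with ω (hω : Y ω = s) hle
    rw [hω] at hle ⊢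
    exact sub_le_mul_logPotential_sub hle
  have hs' : (0 : ℝ) < s := by exact_mod_cast hs
  refine le_of_mul_le_mul_left ?_ hs'
  linarith [hdrift hz]

lemma mul_toReal_measure_ne_zero_le_integral_logPotential_sub
    (hdrift : ∀ s, 0 < s → μ {ω | Y ω = s} ≠ 0 →
      δ * s * (μ {ω | Y ω = s}).toReal ≤ ∫ ω in {ω | Y ω = s}, ((Y ω : ℝ) - Y' ω) ∂μ) :
    δ * (μ {ω | Y ω ≠ 0}).toReal ≤
      ∫ ω, logPotential (Y ω) ∂μ - ∫ ω, logPotential (Y' ω) ∂μ := by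
  have hY'D : ∀ᵐ ω ∂μ, Y' ω ≤ D := by
    filter_upwards [hYD, hY'Y] with ω h h' using h'.trans h
  have hint := integrable_comp_of_ae_le hY hYD logPotential
  have hint' := integrable_comp_of_ae_le hY' hY'D logPotential
  rw [← integral_sub hint hint']
  refine mul_toReal_measure_ne_zero_le_integral hY hYD (hint.sub hint') ?_
    fun s hs => mul_toReal_measure_le_setIntegral_logPotential_sub hY hY' hYD hY'Y hs (hdrift s hs)
  filter_upwards [hY'Y] with ω h
  exact sub_nonneg.2 (monotone_logPotential h)

end

/-- Multiplicative drift theorem for nonnegative-integer processes: if `(X t)` is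
a.s. non-increasing, `X 0 ≤ D` a.s., and the conditional one-step drift on
`{X t = x}` is at least `δ·x` for every `x > 0`, then the expected hitting time
`T = min {t | X t = 0}` (with value `⊤` if `0` is never hit) satisfies
`E[T] ≤ (1 + ln D)/δ`. -/
theorem multiplicative_drift {Ω : Type*} [MeasurableSpace Ω] (μ : Measure Ω)
    [IsProbabilityMeasure μ] (X : ℕ → Ω → ℕ) (hmeas : ∀ t, Measurable (X t))
    (D : ℕ) (δ : ℝ) (hδ : 0 < δ)
    (hmono : ∀ t, ∀ᵐ ω ∂μ, X (t + 1) ω ≤ X t ω)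
    (h0 : ∀ᵐ ω ∂μ, X 0 ω ≤ D)
    (hdrift : ∀ t : ℕ, ∀ x : ℕ, 0 < x → μ {ω | X t ω = x} ≠ 0 →
      δ * x * (μ {ω | X t ω = x}).toReal ≤
        ∫ ω in {ω | X t ω = x}, ((X t ω : ℝ) - (X (t + 1) ω : ℝ)) ∂μ) :
    ∫⁻ ω, sInf ((fun t : ℕ => (t : ℝ≥0∞)) '' {t : ℕ | X t ω = 0}) ∂μ ≤
      ENNReal.ofReal ((1 + Real.log D) / δ) := by
  have hanti : ∀ᵐ ω ∂μ, Antitone fun t => X t ω := by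
    filter_upwards [ae_all_iff.2 hmono] with ω hω using antitone_nat_of_succ_le hω
  have hbound : ∀ t, ∀ᵐ ω ∂μ, X t ω ≤ D := fun t => by
    filter_upwards [hanti, h0] with ω hω hω0 using (hω t.zero_le).trans hω0
  have hstep : ∀ t, δ * (μ {ω | X t ω ≠ 0}).toReal ≤
      ∫ ω, logPotential (X t ω) ∂μ - ∫ ω, logPotential (X (t + 1) ω) ∂μ := fun t =>
    mul_toReal_measure_ne_zero_le_integral_logPotential_sub (hmeas t) (hmeas (t + 1)) (hbound t)
      (hmono t) (hdrift t)
  have hstart : ∫ ω, logPotential (X 0 ω) ∂μ ≤ 1 + Real.log D := by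
    calc ∫ ω, logPotential (X 0 ω) ∂μ ≤ ∫ _, (1 + Real.log D) ∂μ := by
          refine integral_mono_ae (integrable_comp_of_ae_le (hmeas 0) h0 _) (integrable_const _) ?_
          filter_upwards [h0] with ω hω
          exact (monotone_logPotential hω).trans (logPotential_le_one_add_log D)
      _ = 1 + Real.log D := by simp
  rw [lintegral_hittingTime_eq_tsum_measure hmeas hanti]
  calc ∑' t, μ {ω | X t ω ≠ 0} ≤ ENNReal.ofReal ((∫ ω, logPotential (X 0 ω) ∂μ) / δ) :=
        tsum_le_ofReal_div_of_mul_toReal_le_sub (fun _ => measure_ne_top μ _) hδ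
          (fun _ => integral_nonneg fun _ => logPotential_nonneg _) hstep
    _ ≤ ENNReal.ofReal ((1 + Real.log D) / δ) :=
        ENNReal.ofReal_le_ofReal (div_le_div_of_nonneg_right hstart hδ.le)
end

section
/- Let P be an incomparable set of bit-strings (no one Pareto-dominated strictly by another under the fitness f = (f₁,f₂)) that contains at least one element encoding a spanning tree. Then every element of P encodes a spanning tree, and the number of distinct objective values |f(P)| is at most (n−1)·w_min + 1, where w_min = min(w₁^max, w₂^max). -/
open Finset

/-- The simple graph on `Fin n` encoded by the bit-string `s` (with edge `j`
having endpoints `E j`). -/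
def graphOf (n m : ℕ) (E : Fin m → Sym2 (Fin n)) (s : Fin m → Bool) : SimpleGraph (Fin n) :=
  SimpleGraph.fromEdgeSet {e | ∃ j, s j = true ∧ E j = e}

/-- Number of connected components of the subgraph encoded by `s` (isolated
vertices count). -/
noncomputable def numComp (n m : ℕ) (E : Fin m → Sym2 (Fin n)) (s : Fin m → Bool) : ℕ :=
  Nat.card (graphOf n m E s).ConnectedComponent

/-- Number of edges of the subgraph encoded by `s`. -/
def numEdges (m : ℕ) (s : Fin m → Bool) : ℕ :=
  (Finset.univ.filter fun j => s j = true).card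

/-- Maximum edge weight of the `i`-th weight function. -/
def wiMax (m : ℕ) (w : Fin 2 → Fin m → ℕ) (i : Fin 2) : ℕ :=
  Finset.univ.sup (w i)

/-- Maximum edge weight over both weight functions. -/
def wMax (m : ℕ) (w : Fin 2 → Fin m → ℕ) : ℕ :=
  max (wiMax m w 0) (wiMax m w 1)

/-- The penalty constant `w_ub = n² · w_max`. -/
def wUb (n m : ℕ) (w : Fin 2 → Fin m → ℕ) : ℕ :=
  n ^ 2 * wMax m w

/-- The fitness `fᵢ(s) = (c(s)-1)·w_ub² + (e(s)-(n-1))·w_ub + Σ_{j : sⱼ=1} wᵢ(eⱼ)`. -/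
noncomputable def fitness (n m : ℕ) (E : Fin m → Sym2 (Fin n)) (w : Fin 2 → Fin m → ℕ) (i : Fin 2)
    (s : Fin m → Bool) : ℤ :=
  ((numComp n m E s : ℤ) - 1) * (wUb n m w : ℤ) ^ 2 +
    ((numEdges m s : ℤ) - ((n : ℤ) - 1)) * (wUb n m w : ℤ) +
    ∑ j ∈ Finset.univ.filter (fun j => s j = true), (w i j : ℤ)

/-- `s` encodes a spanning tree: its graph is connected and it has `n - 1` edges. -/
def IsSpanningTreeBits (n m : ℕ) (E : Fin m → Sym2 (Fin n)) (s : Fin m → Bool) : Prop :=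
  (graphOf n m E s).Connected ∧ numEdges m s = n - 1

/-!
A spanning tree pays no penalty, so its fitness in each objective is the weight of its `n - 1`
edges, which lies in `[0, (n - 1) · wᵢᵐᵃˣ]` and hence below `w_ub`; every other bit-string pays a
penalty of at least `w_ub` in both objectives. So a spanning tree strictly dominates every
non-tree, and an incomparable set containing a tree consists of trees. Its fitness vectors then
form an antichain in `ℤ × ℤ`, on which each coordinate is injective, and the `i`-th coordinate
takes at most `(n - 1) · wᵢᵐᵃˣ + 1` values.
-/

theorem SimpleGraph.connected_iff_natCard_connectedComponent_eq_one {V : Type*}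
    (G : SimpleGraph V) : G.Connected ↔ Nat.card G.ConnectedComponent = 1 := by
  rw [Nat.card_eq_one_iff_unique, SimpleGraph.connected_iff]
  exact ⟨fun ⟨hpre, _⟩ => ⟨hpre.subsingleton_connectedComponent, inferInstance⟩,
    fun ⟨_, ⟨c⟩⟩ => ⟨fun v w => SimpleGraph.ConnectedComponent.eq.mp (Subsingleton.elim _ _),
      ⟨c.out⟩⟩⟩

theorem IsAntichain.injOn_fst {α β : Type*} [Preorder α] [LinearOrder β] {S : Set (α × β)}
    (hS : IsAntichain (· ≤ ·) S) : S.InjOn Prod.fst := by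
  intro p hp q hq hpq
  by_contra hne
  rcases le_total p.2 q.2 with h | h
  · exact hS hp hq hne ⟨hpq.le, h⟩
  · exact hS hq hp (Ne.symm hne) ⟨hpq.ge, h⟩

theorem IsAntichain.injOn_snd {α β : Type*} [LinearOrder α] [Preorder β] {S : Set (α × β)}
    (hS : IsAntichain (· ≤ ·) S) : S.InjOn Prod.snd := by
  intro p hp q hq hpq
  by_contra hne
  rcases le_total p.1 q.1 with h | h
  · exact hS hp hq hne ⟨h, hpq.le⟩
  · exact hS hq hp (Ne.symm hne) ⟨h, hpq.ge⟩

theorem Set.ncard_le_of_injOn_of_mapsTo_Icc {α : Type*} {S : Set α} {f : α → ℤ} {B : ℕ}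
    (hf : S.InjOn f) (hB : ∀ x ∈ S, f x ∈ Set.Icc 0 (B : ℤ)) : S.ncard ≤ B + 1 := by
  calc S.ncard ≤ (Set.Icc 0 (B : ℤ)).ncard := Set.ncard_le_ncard_of_injOn f hB hf
    _ = B + 1 := by
      rw [← Finset.coe_Icc, Set.ncard_coe_finset, Int.card_Icc]
      omega

section Fitness

variable {n m : ℕ} {E : Fin m → Sym2 (Fin n)} {s : Fin m → Bool}

theorem numComp_eq_one_iff : numComp n m E s = 1 ↔ (graphOf n m E s).Connected :=
  (SimpleGraph.connected_iff_natCard_connectedComponent_eq_one _).symm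

theorem one_le_numComp [Nonempty (Fin n)] : 1 ≤ numComp n m E s :=
  Nat.card_pos

theorem natCard_edgeSet_graphOf_le : Nat.card (graphOf n m E s).edgeSet ≤ numEdges m s := by
  have hsel : ∀ e : (graphOf n m E s).edgeSet, ∃ j, s j = true ∧ E j = e.1 := by
    rintro ⟨e, he⟩
    rw [graphOf, SimpleGraph.edgeSet_fromEdgeSet] at he
    exact he.1
  choose j hj hEj using hsel
  have hinj : Function.Injective fun e => (⟨j e, hj e⟩ : {k : Fin m // s k = true}) := by
    intro a b hab
    apply Subtype.ext
    rw [← hEj a, ← hEj b]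
    exact congrArg (fun k => E k.1) hab
  calc Nat.card (graphOf n m E s).edgeSet ≤ Nat.card {k : Fin m // s k = true} :=
        Nat.card_le_card_of_injective _ hinj
    _ = numEdges m s := by rw [Nat.card_eq_fintype_card, Fintype.card_subtype, numEdges]

theorem le_numEdges_add_one_of_connected (h : (graphOf n m E s).Connected) :
    n ≤ numEdges m s + 1 := by
  simpa using h.card_vert_le_card_edgeSet_add_one.trans
    (Nat.add_le_add_right natCard_edgeSet_graphOf_le 1)

theorem wiMax_le_wMax (w : Fin 2 → Fin m → ℕ) (i : Fin 2) : wiMax m w i ≤ wMax m w := by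
  fin_cases i
  · exact le_max_left _ _
  · exact le_max_right _ _

theorem IsSpanningTreeBits.pos (hs : IsSpanningTreeBits n m E s) : 0 < n :=
  Fin.pos_iff_nonempty.mpr hs.1.nonempty

theorem fitness_of_isSpanningTree (w : Fin 2 → Fin m → ℕ) (i : Fin 2)
    (hs : IsSpanningTreeBits n m E s) :
    fitness n m E w i s = ∑ j ∈ univ.filter (fun j => s j = true), (w i j : ℤ) := by
  rw [fitness, numComp_eq_one_iff.mpr hs.1, hs.2, Nat.cast_sub hs.pos]
  ring

theorem fitness_mem_Icc_of_isSpanningTree (w : Fin 2 → Fin m → ℕ) (i : Fin 2)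
    (hs : IsSpanningTreeBits n m E s) :
    fitness n m E w i s ∈ Set.Icc 0 (((n - 1) * wiMax m w i : ℕ) : ℤ) := by
  rw [fitness_of_isSpanningTree w i hs]
  refine ⟨sum_nonneg fun j _ => by positivity, ?_⟩
  calc ∑ j ∈ univ.filter (fun j => s j = true), (w i j : ℤ)
      ≤ (univ.filter (fun j => s j = true)).card • (wiMax m w i : ℤ) :=
        sum_le_card_nsmul _ _ _ fun j _ => Int.ofNat_le.mpr (le_sup (mem_univ j))
    _ = (((n - 1) * wiMax m w i : ℕ) : ℤ) := by
        rw [← numEdges, hs.2, nsmul_eq_mul]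
        push_cast
        ring

theorem fitness_lt_wUb_of_isSpanningTree {w : Fin 2 → Fin m → ℕ} (hw : 1 ≤ wMax m w)
    (i : Fin 2) (hs : IsSpanningTreeBits n m E s) : fitness n m E w i s < wUb n m w := by
  have hlt : (n - 1) * wiMax m w i < n ^ 2 * wMax m w :=
    calc (n - 1) * wiMax m w i ≤ (n - 1) * wMax m w := Nat.mul_le_mul_left _ (wiMax_le_wMax w i)
      _ < n ^ 2 * wMax m w :=
        Nat.mul_lt_mul_of_pos_right ((Nat.sub_one_lt_of_lt hs.pos).trans_le
          (Nat.le_self_pow two_ne_zero n)) hw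
  exact (fitness_mem_Icc_of_isSpanningTree w i hs).2.trans_lt (by exact_mod_cast hlt)

theorem wUb_le_fitness_of_not_isSpanningTree [Nonempty (Fin n)] {w : Fin 2 → Fin m → ℕ}
    (hw : 1 ≤ wMax m w) (i : Fin 2) (hs : ¬IsSpanningTreeBits n m E s) :
    (wUb n m w : ℤ) ≤ fitness n m E w i s := by
  have hsum : (0 : ℤ) ≤ ∑ j ∈ univ.filter (fun j => s j = true), (w i j : ℤ) :=
    sum_nonneg fun j _ => by positivity
  have hn_le : n ≤ wUb n m w :=
    (Nat.le_self_pow two_ne_zero n).trans (Nat.le_mul_of_pos_right _ hw)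
  have hW : (0 : ℤ) ≤ wUb n m w := by positivity
  rw [fitness]
  by_cases hconn : (graphOf n m E s).Connected
  · have hedges : n ≤ numEdges m s := by
      have := le_numEdges_add_one_of_connected hconn
      have : numEdges m s ≠ n - 1 := fun h => hs ⟨hconn, h⟩
      omega
    have : (1 : ℤ) ≤ numEdges m s - (n - 1) := by omega
    rw [numComp_eq_one_iff.mpr hconn, Nat.cast_one, sub_self, zero_mul, zero_add]
    nlinarith
  · -- `(c - 1) · w_ub² ≥ w_ub² ≥ n · w_ub` outweighs the edge deficit `≥ -(n - 1) · w_ub`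
    have hcomp : (2 : ℤ) ≤ numComp n m E s := by
      have := one_le_numComp (E := E) (s := s)
      have : numComp n m E s ≠ 1 := mt numComp_eq_one_iff.mp hconn
      omega
    have hn : (n : ℤ) ≤ wUb n m w := by exact_mod_cast hn_le
    have he : (0 : ℤ) ≤ numEdges m s := by positivity
    nlinarith [mul_le_mul_of_nonneg_right hcomp (mul_nonneg hW hW),
      mul_le_mul_of_nonneg_right hn hW, mul_nonneg he hW]

end Fitness

theorem incomparable_population_bound_general (n m : ℕ)
    (E : Fin m → Sym2 (Fin n))
    (w : Fin 2 → Fin m → ℕ) (hwpos : 1 ≤ wMax m w)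
    (P : Set (Fin m → Bool))
    (hinc : ∀ s ∈ P, ∀ s' ∈ P,
      fitness n m E w 0 s ≤ fitness n m E w 0 s' →
      fitness n m E w 1 s ≤ fitness n m E w 1 s' →
      fitness n m E w 0 s = fitness n m E w 0 s' ∧
        fitness n m E w 1 s = fitness n m E w 1 s')
    (hst : ∃ s ∈ P, IsSpanningTreeBits n m E s) :
    (∀ s ∈ P, IsSpanningTreeBits n m E s) ∧
      Set.ncard ((fun s => (fitness n m E w 0 s, fitness n m E w 1 s)) '' P) ≤
        (n - 1) * min (wiMax m w 0) (wiMax m w 1) + 1 := by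
  obtain ⟨t, htP, ht⟩ := hst
  have : Nonempty (Fin n) := ht.1.nonempty
  have hall : ∀ s ∈ P, IsSpanningTreeBits n m E s := by
    intro s hsP
    by_contra hs
    have hlt : ∀ i, fitness n m E w i t < fitness n m E w i s := fun i =>
      (fitness_lt_wUb_of_isSpanningTree hwpos i ht).trans_le
        (wUb_le_fitness_of_not_isSpanningTree hwpos i hs)
    exact (hlt 0).ne (hinc t htP s hsP (hlt 0).le (hlt 1).le).1
  refine ⟨hall, ?_⟩
  have hanti : IsAntichain (· ≤ ·)
      ((fun s => (fitness n m E w 0 s, fitness n m E w 1 s)) '' P) := by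
    rintro _ ⟨s, hs, rfl⟩ _ ⟨s', hs', rfl⟩ hne ⟨h0, h1⟩
    exact hne (Prod.ext_iff.mpr (hinc s hs s' hs' h0 h1))
  rcases le_total (wiMax m w 0) (wiMax m w 1) with h | h
  · rw [min_eq_left h]
    refine Set.ncard_le_of_injOn_of_mapsTo_Icc hanti.injOn_fst ?_
    rintro _ ⟨s, hs, rfl⟩
    exact fitness_mem_Icc_of_isSpanningTree w 0 (hall s hs)
  · rw [min_eq_right h]
    refine Set.ncard_le_of_injOn_of_mapsTo_Icc hanti.injOn_snd ?_
    rintro _ ⟨s, hs, rfl⟩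
    exact fitness_mem_Icc_of_isSpanningTree w 1 (hall s hs)

/-- An incomparable set of bit-strings (no strict Pareto domination under
`f = (f₁, f₂)`) that contains a spanning tree consists only of spanning trees,
and has at most `(n-1)·w_min + 1` distinct objective values. -/
theorem incomparable_population_bound (n m : ℕ) (hn : 2 ≤ n)
    (E : Fin m → Sym2 (Fin n)) (hE : Function.Injective E)
    (w : Fin 2 → Fin m → ℕ) (hwpos : 1 ≤ wMax m w)
    (P : Set (Fin m → Bool))
    (hinc : ∀ s ∈ P, ∀ s' ∈ P,
      fitness n m E w 0 s ≤ fitness n m E w 0 s' →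
      fitness n m E w 1 s ≤ fitness n m E w 1 s' →
      fitness n m E w 0 s = fitness n m E w 0 s' ∧
        fitness n m E w 1 s = fitness n m E w 1 s')
    (hst : ∃ s ∈ P, IsSpanningTreeBits n m E s) :
    (∀ s ∈ P, IsSpanningTreeBits n m E s) ∧
      Set.ncard ((fun s => (fitness n m E w 0 s, fitness n m E w 1 s)) '' P) ≤
        (n - 1) * min (wiMax m w 0) (wiMax m w 1) + 1 :=
  incomparable_population_bound_general n m E w hwpos P hinc hst
end

section
/- Let X be a finite list of points in ℝ² sorted independently by each coordinate, and define the crowding distance of a point as the sum over the two coordinates of the normalized gap to its neighbors in the sorted order (with value +∞ for boundary points). Then for any fixed value v ∈ ℝ², at most 4 points of X with objective value v can have strictly positive crowding distance. -/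
/-!
In a single sorted order, a point with positive crowding distance either sits at an end of the
order or differs in value from one of its two neighbours, so by monotonicity it is the first or
the last point of its level set. Each coordinate therefore contributes at most two such points
of value `v`, and a positive sum of two crowding distances has a positive summand.
-/

open scoped Classical

/-- Crowding distance contribution of one objective `f`: for the individual `i`,
let `p` be its position in the sorted order `σ`; boundary positions get `⊤`,
otherwise the normalized gap between the two neighbours. -/
noncomputable def cdisAux {N : ℕ} (f : Fin N → ℝ) (σ : Equiv.Perm (Fin N)) (i : Fin N) :
    EReal :=
  if h : (σ.symm i : ℕ) = 0 ∨ (σ.symm i : ℕ) = N - 1 then ⊤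
  else
    (((f (σ ⟨(σ.symm i : ℕ) + 1, by have := (σ.symm i).isLt; omega⟩) -
          f (σ ⟨(σ.symm i : ℕ) - 1, by have := (σ.symm i).isLt; omega⟩)) /
        (f (σ ⟨N - 1, by have := (σ.symm i).isLt; omega⟩) -
          f (σ ⟨0, by have := (σ.symm i).isLt; omega⟩)) : ℝ) : EReal)

theorem Finset.card_le_two_of_forall_le_or_ge {α : Type*} [LinearOrder α] (s : Finset α)
    (h : ∀ a ∈ s, (∀ b ∈ s, a ≤ b) ∨ (∀ b ∈ s, b ≤ a)) : s.card ≤ 2 := by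
  rcases s.eq_empty_or_nonempty with rfl | hs
  · simp
  suffices s ⊆ {s.min' hs, s.max' hs} from (Finset.card_le_card this).trans Finset.card_le_two
  intro a ha
  rw [Finset.mem_insert, Finset.mem_singleton]
  rcases h a ha with hmin | hmax
  · exact Or.inl (le_antisymm (Finset.le_min' _ _ _ hmin) (s.min'_le a ha))
  · exact Or.inr (le_antisymm (s.le_max' a ha) (Finset.max'_le _ _ _ hmax))

lemma extremal_in_level_set_of_cdisAux_pos {N : ℕ} (f : Fin N → ℝ) (σ : Equiv.Perm (Fin N))
    (h : Monotone fun p => f (σ p)) (p : Fin N) (hp : 0 < cdisAux f σ (σ p)) :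
    (∀ q, f (σ q) = f (σ p) → p ≤ q) ∨ (∀ q, f (σ q) = f (σ p) → q ≤ p) := by
  unfold cdisAux at hp
  simp only [Equiv.symm_apply_apply] at hp
  have hpN := p.isLt
  split_ifs at hp with hb
  · rcases hb with h0 | hlast
    · exact Or.inl fun q _ => by rw [Fin.le_def]; omega
    · exact Or.inr fun q _ => by have := q.isLt; rw [Fin.le_def]; omega
  set pred : Fin N := ⟨p - 1, by omega⟩
  set succ : Fin N := ⟨p + 1, by omega⟩
  have hpred : (pred : ℕ) = p - 1 := rfl
  have hsucc : (succ : ℕ) = p + 1 := rfl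
  have hgap : f (σ succ) - f (σ pred) ≠ 0 :=
    (div_ne_zero_iff.mp (EReal.coe_pos.mp hp).ne').1
  rcases lt_or_ge (f (σ pred)) (f (σ p)) with hlt | hge
  · refine Or.inl fun q hq => ?_
    have : pred < q := h.reflect_lt (hq ▸ hlt)
    rw [Fin.lt_def] at this; rw [Fin.le_def]; omega
  · have hlt : f (σ p) < f (σ succ) :=
      lt_of_le_of_ne (h (by rw [Fin.le_def]; omega)) fun he =>
        hgap (by linarith [h (show pred ≤ p by rw [Fin.le_def]; omega)])
    refine Or.inr fun q hq => ?_
    have : q < succ := h.reflect_lt (hq ▸ hlt)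
    rw [Fin.lt_def] at this; rw [Fin.le_def]; omega

lemma card_filter_eq_and_cdisAux_pos_le_two {N : ℕ} (f : Fin N → ℝ) (σ : Equiv.Perm (Fin N))
    (h : Monotone fun p => f (σ p)) (c : ℝ) :
    (Finset.univ.filter fun i => f i = c ∧ 0 < cdisAux f σ i).card ≤ 2 := by
  rw [← Finset.card_map σ.symm.toEmbedding]
  refine Finset.card_le_two_of_forall_le_or_ge _ fun p hp => ?_
  simp only [Finset.mem_map_equiv, Equiv.symm_symm, Finset.mem_filter, Finset.mem_univ,
    true_and] at hp ⊢
  rcases extremal_in_level_set_of_cdisAux_pos f σ h p hp.2 with hmin | hmax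
  · exact Or.inl fun q hq => hmin q (hq.1.trans hp.1.symm)
  · exact Or.inr fun q hq => hmax q (hq.1.trans hp.1.symm)

theorem crowding_distance_at_most_four_general (N : ℕ) (x : Fin N → ℝ × ℝ)
    (σ₁ σ₂ : Equiv.Perm (Fin N))
    (h₁ : Monotone fun p => (x (σ₁ p)).1) (h₂ : Monotone fun p => (x (σ₂ p)).2)
    (v : ℝ × ℝ) :
    (Finset.univ.filter fun i : Fin N =>
        x i = v ∧ 0 < cdisAux (fun j => (x j).1) σ₁ i + cdisAux (fun j => (x j).2) σ₂ i).card
      ≤ 4 := by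
  have hsub : (Finset.univ.filter fun i : Fin N =>
        x i = v ∧ 0 < cdisAux (fun j => (x j).1) σ₁ i + cdisAux (fun j => (x j).2) σ₂ i) ⊆
      (Finset.univ.filter fun i => (x i).1 = v.1 ∧ 0 < cdisAux (fun j => (x j).1) σ₁ i) ∪
      (Finset.univ.filter fun i => (x i).2 = v.2 ∧ 0 < cdisAux (fun j => (x j).2) σ₂ i) := by
    intro i
    simp only [Finset.mem_union, Finset.mem_filter, Finset.mem_univ, true_and]
    rintro ⟨rfl, hpos⟩
    by_contra! hnonpos
    exact hpos.not_ge (add_nonpos (hnonpos.1 rfl) (hnonpos.2 rfl))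
  calc _ ≤ _ := Finset.card_le_card hsub
    _ ≤ 2 + 2 := (Finset.card_union_le _ _).trans (add_le_add
        (card_filter_eq_and_cdisAux_pos_le_two _ σ₁ h₁ v.1)
        (card_filter_eq_and_cdisAux_pos_le_two _ σ₂ h₂ v.2))

/-- For a population of points of ℝ² with fixed sorted orders `σ₁, σ₂` by each
coordinate, at most `4` individuals with a given objective value `v` can have
strictly positive (total) crowding distance. -/
theorem crowding_distance_at_most_four (N : ℕ) (hN : 2 ≤ N) (x : Fin N → ℝ × ℝ)
    (σ₁ σ₂ : Equiv.Perm (Fin N))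
    (h₁ : Monotone fun p => (x (σ₁ p)).1) (h₂ : Monotone fun p => (x (σ₂ p)).2)
    (v : ℝ × ℝ) :
    (Finset.univ.filter fun i : Fin N =>
        x i = v ∧ 0 < cdisAux (fun j => (x j).1) σ₁ i + cdisAux (fun j => (x j).2) σ₂ i).card
      ≤ 4 :=
  crowding_distance_at_most_four_general N x σ₁ σ₂ h₁ h₂ v
end

section
/- Let T be a spanning tree of a connected graph G and let T* be a spanning tree minimizing a weight function w̃ which is a nonnegative linear combination of the edge weights. Then there exist edge pairs (e₁,f₁), …, (e_k,f_k) with k ≤ n−1, where f_j ∈ T \ T* and e_j ∈ T* \ T, such that each exchange T − f_j + e_j is a spanning tree and Σ_j (w̃(f_j) − w̃(e_j)) ≥ w̃(T) − w̃(T*). -/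
/-- `T` is a spanning tree of `G`: its edges are edges of `G`, the graph it spans is
connected, and it has `|V| - 1` edges. -/
def IsSpanningTreeEdges {V : Type*} [Fintype V] (G : SimpleGraph V)
    (T : Finset (Sym2 V)) : Prop :=
  ↑T ⊆ G.edgeSet ∧ (SimpleGraph.fromEdgeSet (↑T : Set (Sym2 V))).Connected ∧
    T.card = Fintype.card V - 1

/-! Spanning trees have the symmetric exchange property: if `A`, `B` are spanning trees and
`f ∈ A \ B`, the two components of `A - f` are joined by some edge `e` of the `B`-path between the
endpoints of `f`, and then both `A - f + e` and `B - e + f` are spanning trees. Starting from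
`B = T*` and exchanging with `A = T` repeatedly, each step replaces an edge `e ∈ T* \ T` of `B`
by an edge `f ∈ T \ T*`, so after `|T \ T*| ≤ n - 1` steps `B = T`. Every pair `(e, f)` used
gives a spanning tree `T - f + e`, and the weight changes of `B` telescope to `w(T) - w(T*)`. -/

namespace SimpleGraph

variable {V : Type*} {H : SimpleGraph V}

lemma Walk.reachable_deleteEdges_or {w u : V} (p : H.Walk w u) (v : V) :
    (H.deleteEdges {s(u, v)}).Reachable w u ∨ (H.deleteEdges {s(u, v)}).Reachable w v := by
  induction p with
  | nil => exact .inl .rfl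
  | @cons a b u hab _ ih =>
    by_cases he : s(a, b) = s(u, v)
    · rcases Sym2.eq_iff.mp he with ⟨rfl, -⟩ | ⟨rfl, -⟩
      exacts [.inl .rfl, .inr .rfl]
    · have hab' : (H.deleteEdges {s(u, v)}).Adj a b := deleteEdges_adj.mpr ⟨hab, he⟩
      exact ih.imp hab'.reachable.trans hab'.reachable.trans

lemma Connected.of_deleteEdges_le_of_reachable (hH : H.Connected) {K : SimpleGraph V} {u v : V}
    (hle : H.deleteEdges {s(u, v)} ≤ K) (huv : K.Reachable u v) : K.Connected := by
  have := hH.nonempty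
  refine (connected_iff_exists_forall_reachable K).mpr ⟨u, fun w => ?_⟩
  obtain ⟨p⟩ := hH.preconnected w u
  rcases p.reachable_deleteEdges_or v with h | h
  · exact (h.mono hle).symm
  · exact huv.trans (h.mono hle).symm

lemma Walk.IsTrail.exists_boundary_edge {u v : V} {p : H.Walk u v} (hp : p.IsTrail) (S : Set V)
    (hu : u ∈ S) (hv : v ∉ S) :
    ∃ x y, s(x, y) ∈ p.edges ∧ x ∈ S ∧ y ∉ S ∧
      (H.deleteEdges {s(x, y)}).Reachable u x ∧ (H.deleteEdges {s(x, y)}).Reachable y v := by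
  induction p with
  | nil => exact absurd hu hv
  | @cons a b _ hab q ih =>
    obtain ⟨hq, hnotin⟩ := (Walk.isTrail_cons hab q).mp hp
    by_cases hb : b ∈ S
    · obtain ⟨x, y, hxy, hx, hy, hbx, hyv⟩ := ih hq hb hv
      have hab' : (H.deleteEdges {s(x, y)}).Adj a b :=
        deleteEdges_adj.mpr ⟨hab, fun h => hnotin (Set.mem_singleton_iff.mp h ▸ hxy)⟩
      exact ⟨x, y, List.mem_cons_of_mem _ hxy, hx, hy, hab'.reachable.trans hbx, hyv⟩
    · exact ⟨a, b, List.mem_cons_self, hu, hb, .rfl,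
        reachable_deleteEdges_iff_exists_walk.mpr ⟨q, hnotin⟩⟩

lemma deleteEdges_fromEdgeSet_le_insert_erase [DecidableEq V] (S : Finset (Sym2 V))
    (e f : Sym2 V) :
    (fromEdgeSet (S : Set (Sym2 V))).deleteEdges {f} ≤
      fromEdgeSet (↑(insert e (S.erase f)) : Set (Sym2 V)) := by
  intro a b
  simp only [deleteEdges_adj, fromEdgeSet_adj, Finset.coe_insert, Finset.coe_erase,
    Set.mem_insert_iff, Set.mem_sdiff, Finset.mem_coe, Set.mem_singleton_iff]
  tauto

lemma IsTree.exists_symm_exchange [DecidableEq V] {A B : Finset (Sym2 V)}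
    (hA : (fromEdgeSet (A : Set (Sym2 V))).IsTree)
    (hB : (fromEdgeSet (B : Set (Sym2 V))).Connected)
    {u v : V} (huv : u ≠ v) (hfA : s(u, v) ∈ A) (hfB : s(u, v) ∉ B) :
    ∃ e ∈ B, e ∉ A ∧
      (fromEdgeSet (↑(insert e (A.erase s(u, v))) : Set (Sym2 V))).Connected ∧
      (fromEdgeSet (↑(insert s(u, v) (B.erase e)) : Set (Sym2 V))).Connected := by
  set A' := (fromEdgeSet (A : Set (Sym2 V))).deleteEdges {s(u, v)}
  have hf_bridge : ¬ A'.Reachable u v :=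
    isBridge_iff.mp <| isAcyclic_iff_forall_isBridge.mp hA.isAcyclic <| by
      simpa [edgeSet_fromEdgeSet] using ⟨hfA, huv⟩
  -- a `B`-path from `u` to `v` leaves the component of `u` in `A - f` through some edge `e`
  obtain ⟨p⟩ := hB.preconnected u v
  obtain ⟨x, y, hxy, hx, hy, hux, hyv⟩ :=
    p.toPath.2.isTrail.exists_boundary_edge {w | A'.Reachable w u} .rfl
      (fun h => hf_bridge h.symm)
  have hxyB : (fromEdgeSet (B : Set (Sym2 V))).Adj x y := p.toPath.1.adj_of_mem_edges hxy
  rw [fromEdgeSet_adj] at hxyB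
  have hyv' : A'.Reachable y v := by
    obtain ⟨q⟩ := hA.connected.preconnected y u
    exact (q.reachable_deleteEdges_or v).resolve_left hy
  refine ⟨s(x, y), hxyB.1, fun hxyA => hy ?_, ?_, ?_⟩
  · have hne : s(x, y) ≠ s(u, v) := fun h => hfB (h ▸ hxyB.1)
    have hyx : A'.Adj y x :=
      (deleteEdges_adj.mpr ⟨(fromEdgeSet_adj _).mpr ⟨hxyA, hxyB.2⟩, hne⟩).symm
    exact hyx.reachable.trans hx
  · have hle := deleteEdges_fromEdgeSet_le_insert_erase A s(x, y) s(u, v)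
    have he : (fromEdgeSet (↑(insert s(x, y) (A.erase s(u, v))) : Set (Sym2 V))).Adj x y := by
      simpa [fromEdgeSet_adj] using hxyB.2
    exact hA.connected.of_deleteEdges_le_of_reachable hle
      (((hx : A'.Reachable x u).symm.mono hle).trans (he.reachable.trans (hyv'.mono hle)))
  · have hle := deleteEdges_fromEdgeSet_le_insert_erase B s(u, v) s(x, y)
    have hf : (fromEdgeSet (↑(insert s(u, v) (B.erase s(x, y))) : Set (Sym2 V))).Adj u v := by
      simpa [fromEdgeSet_adj] using huv
    exact hB.of_deleteEdges_le_of_reachable hle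
      ((hux.symm.mono hle).trans (hf.reachable.trans (hyv.symm.mono hle)))

end SimpleGraph

namespace IsSpanningTreeEdges

open SimpleGraph Finset

variable {V : Type*} [Fintype V] {G : SimpleGraph V} {S T A B : Finset (Sym2 V)}

lemma isTree (hT : IsSpanningTreeEdges G T) : (fromEdgeSet (T : Set (Sym2 V))).IsTree := by
  obtain ⟨hTG, hconn, hcard⟩ := hT
  have := hconn.nonempty
  have hedges : (fromEdgeSet (T : Set (Sym2 V))).edgeSet = T := by
    rw [edgeSet_fromEdgeSet, sdiff_eq_left]
    exact Set.disjoint_left.mpr fun e he => G.not_isDiag_of_mem_edgeSet (hTG he)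
  rw [isTree_iff_connected_and_card, hedges, Nat.card_coe_set_eq, Set.ncard_coe_finset,
    Nat.card_eq_fintype_card, hcard]
  exact ⟨hconn, Nat.sub_add_cancel Fintype.card_pos⟩

variable [DecidableEq V]

lemma insert_erase (hS : IsSpanningTreeEdges G S) {e f : Sym2 V} (hf : f ∈ S) (he : e ∉ S)
    (heG : e ∈ G.edgeSet)
    (hconn : (fromEdgeSet (↑(insert e (S.erase f)) : Set (Sym2 V))).Connected) :
    IsSpanningTreeEdges G (insert e (S.erase f)) := by
  refine ⟨?_, hconn, ?_⟩
  · rw [coe_insert]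
    exact Set.insert_subset heG ((coe_subset.mpr (erase_subset f S)).trans hS.1)
  · rw [card_insert_of_notMem fun h => he (mem_of_mem_erase h), card_erase_add_one hf, hS.2.2]

theorem exists_symm_exchange (hA : IsSpanningTreeEdges G A) (hB : IsSpanningTreeEdges G B)
    {f : Sym2 V} (hfA : f ∈ A) (hfB : f ∉ B) :
    ∃ e ∈ B, e ∉ A ∧ IsSpanningTreeEdges G (insert e (A.erase f)) ∧
      IsSpanningTreeEdges G (insert f (B.erase e)) := by
  induction f using Sym2.ind with
  | _ u v =>
  have huv : u ≠ v := G.ne_of_adj (hA.1 hfA)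
  obtain ⟨e, heB, heA, hconnA, hconnB⟩ := hA.isTree.exists_symm_exchange hB.2.1 huv hfA hfB
  exact ⟨e, heB, heA, hA.insert_erase hfA heA (hB.1 heB) hconnA,
    hB.insert_erase heB hfB (hA.1 hfA) hconnB⟩

theorem exists_exchange_sequence {M : Type*} [AddCommGroup M] (wt : Sym2 V → M)
    (hT : IsSpanningTreeEdges G T) (hB : IsSpanningTreeEdges G B) :
    ∃ ep fp : Fin (T \ B).card → Sym2 V,
      (∀ j, fp j ∈ T \ B ∧ ep j ∈ B \ T ∧
        IsSpanningTreeEdges G (insert (ep j) (T.erase (fp j)))) ∧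
      ∑ e ∈ T, wt e - ∑ e ∈ B, wt e = ∑ j, (wt (fp j) - wt (ep j)) := by
  induction hm : (T \ B).card generalizing B with
  | zero =>
    have hTB : T ⊆ B := sdiff_eq_empty_iff_subset.mp (card_eq_zero.mp hm)
    obtain rfl : T = B := eq_of_subset_of_card_le hTB (hB.2.2.trans hT.2.2.symm).le
    exact ⟨Fin.elim0, Fin.elim0, fun j => j.elim0, by simp⟩
  | succ m ih =>
    obtain ⟨f, hf⟩ := card_pos.mp (by omega : 0 < (T \ B).card)
    obtain ⟨hfT, hfB⟩ := mem_sdiff.mp hf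
    obtain ⟨e, heB, heT, hTef, hBfe⟩ := hT.exists_symm_exchange hB hfT hfB
    have hsdiff : T \ insert f (B.erase e) = (T \ B).erase f := by
      ext x; simp only [mem_sdiff, mem_insert, mem_erase]; grind
    obtain ⟨ep, fp, hexch, hsum⟩ :=
      ih hBfe (by rw [hsdiff, card_erase_of_mem hf, hm, Nat.add_sub_cancel])
    refine ⟨Fin.cons e ep, Fin.cons f fp, fun j => ?_, ?_⟩
    · induction j using Fin.cases with
      | zero => exact ⟨hf, mem_sdiff.mpr ⟨heB, heT⟩, hTef⟩
      | succ j =>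
        obtain ⟨hfpj, hepj, htree⟩ := hexch j
        simp only [Fin.cons_succ, mem_sdiff, mem_insert, mem_erase] at hfpj hepj ⊢
        exact ⟨⟨hfpj.1, by grind⟩, ⟨by grind, hepj.2⟩, htree⟩
    · rw [sum_insert (fun h => hfB (mem_of_mem_erase h)), sum_erase_eq_sub heB] at hsum
      simp only [Fin.sum_univ_succ, Fin.cons_zero, Fin.cons_succ, ← hsum]
      abel

end IsSpanningTreeEdges

theorem spanning_tree_exchange_general {V : Type*} [Fintype V] [DecidableEq V] (n : ℕ)
    (hn : Fintype.card V = n) (G : SimpleGraph V)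
    (wt : Sym2 V → ℝ)
    (T Tstar : Finset (Sym2 V))
    (hT : IsSpanningTreeEdges G T) (hTs : IsSpanningTreeEdges G Tstar) :
    ∃ k : ℕ, k ≤ n - 1 ∧ ∃ ep fp : Fin k → Sym2 V,
      (∀ j, fp j ∈ T \ Tstar ∧ ep j ∈ Tstar \ T ∧
        IsSpanningTreeEdges G (insert (ep j) (T.erase (fp j)))) ∧
      (∑ e ∈ T, wt e) - ∑ e ∈ Tstar, wt e ≤ ∑ j, (wt (fp j) - wt (ep j)) := by
  obtain ⟨ep, fp, hexch, hsum⟩ := hT.exists_exchange_sequence wt hTs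
  refine ⟨(T \ Tstar).card, ?_, ep, fp, hexch, hsum.le⟩
  rw [← hn, ← hT.2.2]
  exact Finset.card_le_card Finset.sdiff_subset

/-- Exchange lemma (Neumann–Wegener, Lemma 2, combinatorial core): for a spanning
tree `T` and an optimal spanning tree `T*` w.r.t. a nonnegative weight `w̃`, there
are at most `n - 1` exchanges `(e_j, f_j)` with `f_j ∈ T \ T*`, `e_j ∈ T* \ T`, each
producing a spanning tree, whose total weight decrease is at least `w̃(T) - w̃(T*)`. -/
theorem spanning_tree_exchange {V : Type*} [Fintype V] [DecidableEq V] (n : ℕ)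
    (hn : Fintype.card V = n) (G : SimpleGraph V) (hG : G.Connected)
    (wt : Sym2 V → ℝ) (hwt : ∀ e, 0 ≤ wt e)
    (T Tstar : Finset (Sym2 V))
    (hT : IsSpanningTreeEdges G T) (hTs : IsSpanningTreeEdges G Tstar)
    (hopt : ∀ T', IsSpanningTreeEdges G T' → ∑ e ∈ Tstar, wt e ≤ ∑ e ∈ T', wt e) :
    ∃ k : ℕ, k ≤ n - 1 ∧ ∃ ep fp : Fin k → Sym2 V,
      (∀ j, fp j ∈ T \ Tstar ∧ ep j ∈ Tstar \ T ∧
        IsSpanningTreeEdges G (insert (ep j) (T.erase (fp j)))) ∧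
      (∑ e ∈ T, wt e) - ∑ e ∈ Tstar, wt e ≤ ∑ j, (wt (fp j) - wt (ep j)) :=
  spanning_tree_exchange_general n hn G wt T Tstar hT hTs
end
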